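/- Let L_r : R^p → R be C² with ||∇²L_r||_op ≤ M_r on the segments from w to w + δ_std and from w to w + δ_rosu, where δ_std = ρ g_f/||g_f||, δ_rosu = ρ q/||q||, q = (I - P_r) g_f ≠ 0, and g_f, g_r = ∇L_r(w) are nonzero. Then L_r(w + δ_std) - L_r(w + δ_rosu) ≥ ρ ||g_r|| cos θ - M_r ρ², where cos θ = g_f^T g_r / (||g_f|| ||g_r||). -/

import Mathlib

/-!
Along the segment `t ↦ w + t • δ` the derivative of `L_r` moves by at most `M_r * ‖δ‖ * t`, so the
first-order Taylor remainder of `L_r` at `w` in direction `δ` is at most `M_r / 2 * ‖δ‖ ^ 2`.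
Both perturbations have norm `ρ`; the linear term is `ρ ‖g_r‖ cos θ` for `δstd` and vanishes for
`δrosu`, because `q` is orthogonal to `g_r`. The two remainders add up to `M_r ρ²`.
-/

open RealInnerProductSpace Set

section Taylor

variable {E F : Type*} [NormedAddCommGroup E] [NormedSpace ℝ E]
  [NormedAddCommGroup F] [NormedSpace ℝ F] {f : E → F} {x δ : E} {M : ℝ}

theorem norm_fderiv_add_smul_sub_fderiv_le (hf : ContDiff ℝ 2 f)
    (hM : ∀ t ∈ Icc (0 : ℝ) 1, ‖iteratedFDeriv ℝ 2 f (x + t • δ)‖ ≤ M) :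
    ∀ t ∈ Icc (0 : ℝ) 1, ‖fderiv ℝ f (x + t • δ) - fderiv ℝ f x‖ ≤ M * ‖δ‖ * t := by
  have hf' : Differentiable ℝ (fderiv ℝ f) :=
    (hf.fderiv_right (m := 1) le_rfl).differentiable one_ne_zero
  have hderiv (t : ℝ) : HasDerivAt (fun s : ℝ => fderiv ℝ f (x + s • δ))
      (fderiv ℝ (fderiv ℝ f) (x + t • δ) δ) t := by
    have hline : HasDerivAt (fun s : ℝ => x + s • δ) δ t := by
      simpa using ((hasDerivAt_id t).smul_const δ).const_add x
    exact (hf' _).hasFDerivAt.comp_hasDerivAt t hline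
  have hbound : ∀ t ∈ Ico (0 : ℝ) 1, ‖fderiv ℝ (fderiv ℝ f) (x + t • δ) δ‖ ≤ M * ‖δ‖ := by
    intro t ht
    calc ‖fderiv ℝ (fderiv ℝ f) (x + t • δ) δ‖
        ≤ ‖fderiv ℝ (fderiv ℝ f) (x + t • δ)‖ * ‖δ‖ := ContinuousLinearMap.le_opNorm _ _
      _ = ‖iteratedFDeriv ℝ 2 f (x + t • δ)‖ * ‖δ‖ := by
        rw [← norm_iteratedFDeriv_one, norm_iteratedFDeriv_fderiv]
      _ ≤ M * ‖δ‖ := by gcongr; exact hM t (Ico_subset_Icc_self ht)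
  intro t ht
  simpa using norm_image_sub_le_of_norm_deriv_le_segment'
    (fun s _ => (hderiv s).hasDerivWithinAt) hbound t ht

theorem norm_sub_sub_fderiv_le_of_norm_iteratedFDeriv_two_le (hf : ContDiff ℝ 2 f)
    (hM : ∀ t ∈ Icc (0 : ℝ) 1, ‖iteratedFDeriv ℝ 2 f (x + t • δ)‖ ≤ M) :
    ‖f (x + δ) - f x - fderiv ℝ f x δ‖ ≤ M / 2 * ‖δ‖ ^ 2 := by
  have hderiv (t : ℝ) : HasDerivAt (fun s : ℝ => f (x + s • δ) - f x - s • fderiv ℝ f x δ)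
      ((fderiv ℝ f (x + t • δ) - fderiv ℝ f x) δ) t := by
    have hline : HasDerivAt (fun s : ℝ => x + s • δ) δ t := by
      simpa using ((hasDerivAt_id t).smul_const δ).const_add x
    have hcomp := ((hf.differentiable two_ne_zero) _).hasFDerivAt.comp_hasDerivAt t hline
    exact ((hcomp.sub_const (f x)).sub ((hasDerivAt_id t).smul_const (fderiv ℝ f x δ))).congr_deriv
      (by simp)
  have hB (t : ℝ) : HasDerivAt (fun s : ℝ => M / 2 * ‖δ‖ ^ 2 * s ^ 2) (M * ‖δ‖ ^ 2 * t) t :=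
    ((hasDerivAt_pow 2 t).const_mul (M / 2 * ‖δ‖ ^ 2)).congr_deriv (by push_cast; ring)
  have hbound : ∀ t ∈ Ico (0 : ℝ) 1,
      ‖(fderiv ℝ f (x + t • δ) - fderiv ℝ f x) δ‖ ≤ M * ‖δ‖ ^ 2 * t := by
    intro t ht
    calc ‖(fderiv ℝ f (x + t • δ) - fderiv ℝ f x) δ‖
        ≤ ‖fderiv ℝ f (x + t • δ) - fderiv ℝ f x‖ * ‖δ‖ := ContinuousLinearMap.le_opNorm _ _
      _ ≤ M * ‖δ‖ * t * ‖δ‖ := by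
        gcongr; exact norm_fderiv_add_smul_sub_fderiv_le hf hM t (Ico_subset_Icc_self ht)
      _ = M * ‖δ‖ ^ 2 * t := by ring
  simpa using image_norm_le_of_norm_deriv_right_le_deriv_boundary
    (fun t _ => (hderiv t).continuousAt.continuousWithinAt)
    (fun t _ => (hderiv t).hasDerivWithinAt) (by simp) hB hbound (right_mem_Icc.2 zero_le_one)

end Taylor

section Inner

variable {E : Type*} [NormedAddCommGroup E] [InnerProductSpace ℝ E]

theorem norm_div_norm_smul_self {v : E} (hv : v ≠ 0) {ρ : ℝ} (hρ : 0 ≤ ρ) :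
    ‖(ρ / ‖v‖) • v‖ = ρ := by
  have : ‖v‖ ≠ 0 := norm_ne_zero_iff.2 hv
  rw [norm_smul, Real.norm_of_nonneg (by positivity), div_mul_cancel₀ ρ this]

theorem real_inner_sub_inner_div_norm_sq_smul_self (u v : E) :
    ⟪v, u - (⟪u, v⟫ / ‖v‖ ^ 2) • v⟫ = 0 := by
  rcases eq_or_ne v 0 with rfl | hv
  · simp
  rw [inner_sub_right, real_inner_smul_right, real_inner_self_eq_norm_sq, real_inner_comm,
    div_mul_cancel₀ _ (by positivity), sub_self]

end Inner

/-- Retain-loss gap between the standard and ROSU perturbations is at least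
`ρ‖g_r‖cos θ - M_r ρ²`. -/
theorem rosu_retain_gap {p : ℕ}
    (L_r : EuclideanSpace ℝ (Fin p) → ℝ) (M_r ρ : ℝ) (hρ : 0 < ρ)
    (w g_f g_r : EuclideanSpace ℝ (Fin p))
    (hgf : g_f ≠ 0) (hgr : g_r = gradient L_r w) (hgrne : g_r ≠ 0)
    (q : EuclideanSpace ℝ (Fin p))
    (hq : q = g_f - (⟪g_f, g_r⟫ / ‖g_r‖ ^ 2) • g_r) (hqne : q ≠ 0)
    (δstd δrosu : EuclideanSpace ℝ (Fin p))
    (hstd : δstd = (ρ / ‖g_f‖) • g_f) (hrosu : δrosu = (ρ / ‖q‖) • q)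
    (hC : ContDiff ℝ 2 L_r)
    (hM1 : ∀ t : ℝ, t ∈ Set.Icc (0 : ℝ) 1 →
      ‖iteratedFDeriv ℝ 2 L_r (w + t • δstd)‖ ≤ M_r)
    (hM2 : ∀ t : ℝ, t ∈ Set.Icc (0 : ℝ) 1 →
      ‖iteratedFDeriv ℝ 2 L_r (w + t • δrosu)‖ ≤ M_r) :
    L_r (w + δstd) - L_r (w + δrosu) ≥
      ρ * ‖g_r‖ * (⟪g_f, g_r⟫ / (‖g_f‖ * ‖g_r‖)) - M_r * ρ ^ 2 := by
  have hfderiv (y : EuclideanSpace ℝ (Fin p)) : fderiv ℝ L_r w y = ⟪g_r, y⟫ := by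
    rw [hgr, inner_gradient_left]
  have hstd_slope : fderiv ℝ L_r w δstd = ρ * ‖g_r‖ * (⟪g_f, g_r⟫ / (‖g_f‖ * ‖g_r‖)) := by
    have : ‖g_r‖ ≠ 0 := norm_ne_zero_iff.2 hgrne
    rw [hfderiv, hstd, real_inner_smul_right, real_inner_comm]
    field_simp
  have hrosu_slope : fderiv ℝ L_r w δrosu = 0 := by
    rw [hfderiv, hrosu, real_inner_smul_right, hq,
      real_inner_sub_inner_div_norm_sq_smul_self, mul_zero]
  have hstd_norm : ‖δstd‖ = ρ := hstd ▸ norm_div_norm_smul_self hgf hρ.le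
  have hrosu_norm : ‖δrosu‖ = ρ := hrosu ▸ norm_div_norm_smul_self hqne hρ.le
  have hstd_taylor := norm_sub_sub_fderiv_le_of_norm_iteratedFDeriv_two_le hC hM1
  have hrosu_taylor := norm_sub_sub_fderiv_le_of_norm_iteratedFDeriv_two_le hC hM2
  rw [Real.norm_eq_abs, hstd_slope, hstd_norm] at hstd_taylor
  rw [Real.norm_eq_abs, hrosu_slope, hrosu_norm] at hrosu_taylor
  linarith [(abs_le.1 hstd_taylor).1, (abs_le.1 hrosu_taylor).2]
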